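/- arXiv:2507.15611 — 2 statements merged into one kernel-verified Lean document; each statement's English description precedes it below -/
import Mathlib

section
/- For every natural number u ≥ 1, the bidegree (4, 4 + n_{1,2,u}) component of E, i.e. E^{4, 2^{u+3}+11}, is a one-dimensional F₂-vector space with basis the class of h_{u+3}c₀; in particular h_{u+3}c₀ ≠ 0 in E. -/
/-!
Degree reasons. A monomial of homological degree 4 is a generator of degree 4, a product
`cᵢhⱼ`, or a product of four `h`'s. Modulo 16 the internal degree of `hᵢ` is 1, 2, 4, 8 or 0
and `2^{u+3} + 11 ≡ 11`; this rules out the generators of degree 4, forces `cᵢhⱼ = c₀h_{u+3}`,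
and forces a product of four `h`'s to contain `h₀h₁ = 0`, except for `h₀³h₃`, whose internal
degree is 11 itself.

The class of `h_{u+3}c₀` is nonzero because `h_{u+3} ↦ ε`, `c₀ ↦ 1` and all other generators
`↦ 0` defines a homomorphism to the dual numbers over `𝔽₂`: `ε² = 0` kills the relations in
which `h_{u+3}` appears squared, and `u ≥ 1` keeps `h_{u+3}c₀` out of the relations `h_{i+3}cᵢ`.
-/

noncomputable section

open MvPolynomial

/-- Generators of Chen's algebra `E` in homological degrees ≤ 4.
Here `g i` denotes the generator `g_{i+1}` (the family `g` starts at index 1). -/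
inductive Gen : Type
  | h (i : ℕ)
  | c (i : ℕ)
  | d (i : ℕ)
  | e (i : ℕ)
  | f (i : ℕ)
  | g (i : ℕ)
  | p (i : ℕ)
  | D3 (i : ℕ)
  | p' (i : ℕ)

/-- Homological degree of the generators. -/
def hdeg : Gen → ℕ
  | .h _ => 1
  | .c _ => 3
  | _ => 4

/-- Internal degree of the generators. -/
def ideg : Gen → ℕ
  | .h i => 2 ^ i
  | .c i => 2 ^ (i + 3) + 2 ^ (i + 1) + 2 ^ i
  | .d i => 2 ^ (i + 4) + 2 ^ (i + 1)
  | .e i => 2 ^ (i + 4) + 2 ^ (i + 2) + 2 ^ i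
  | .f i => 2 ^ (i + 4) + 2 ^ (i + 2) + 2 ^ (i + 1)
  | .g i => 2 ^ (i + 4) + 2 ^ (i + 3)      -- internal degree of `g_{i+1}`
  | .p i => 2 ^ (i + 5) + 2 ^ (i + 2) + 2 ^ i
  | .D3 i => 2 ^ (i + 6) + 2 ^ i
  | .p' i => 2 ^ (i + 6) + 2 ^ (i + 3) + 2 ^ i

abbrev P := MvPolynomial Gen (ZMod 2)

/-- Chen's relations in homological degrees ≤ 4:
`hᵢhᵢ₊₁ = 0`, `hᵢhᵢ₊₂² = 0`, `hᵢ²hᵢ₊₃² = 0`, `hᵢ³ = hᵢ₋₁²hᵢ₊₁` (i ≥ 1), and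
`hⱼcᵢ = 0` for `j ∈ {i-1, i, i+2, i+3}`. -/
def rels : Set P :=
  ⋃ i : ℕ,
    ({ X (Gen.h i) * X (Gen.h (i + 1)),
       X (Gen.h i) * X (Gen.h (i + 2)) ^ 2,
       X (Gen.h i) ^ 2 * X (Gen.h (i + 3)) ^ 2,
       X (Gen.h (i + 1)) ^ 3 - X (Gen.h i) ^ 2 * X (Gen.h (i + 2)),
       X (Gen.h i) * X (Gen.c (i + 1)),
       X (Gen.h i) * X (Gen.c i),
       X (Gen.h (i + 2)) * X (Gen.c i),
       X (Gen.h (i + 3)) * X (Gen.c i) } : Set P)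

def relIdeal : Ideal P := Ideal.span rels

/-- Chen's algebra `E`, isomorphic to `Ext_A^{k,*}(ℤ/2, ℤ/2)` in homological degrees `k ≤ 4`. -/
abbrev E := P ⧸ relIdeal

def mkE : P →ₐ[ZMod 2] E := Ideal.Quotient.mkₐ (ZMod 2) relIdeal

/-- The bidegree `(k, d)` component `E^{k,d}` of `E`: the image of the space of polynomials
that are weighted homogeneous of homological degree `k` and internal degree `d`. -/
def component (k d : ℕ) : Submodule (ZMod 2) E :=
  Submodule.map mkE.toLinearMap
    (weightedHomogeneousSubmodule (ZMod 2) hdeg k ⊓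
      weightedHomogeneousSubmodule (ZMod 2) ideg d)

/-- `n_{s,t,u} = 2^{s+t+u} + 2^{s+t} + 2^s - 3`. -/
def nstu (s t u : ℕ) : ℕ := 2 ^ (s + t + u) + 2 ^ (s + t) + 2 ^ s - 3

open Finsupp (single weight)

lemma two_pow_cases_mod_sixteen (n : ℕ) :
    n = 0 ∧ 2 ^ n = 1 ∨ n = 1 ∧ 2 ^ n = 2 ∨ n = 2 ∧ 2 ^ n = 4 ∨ n = 3 ∧ 2 ^ n = 8 ∨
      4 ≤ n ∧ 2 ^ n % 16 = 0 ∧ 0 < 2 ^ n := by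
  rcases Nat.lt_or_ge n 4 with h | h
  · interval_cases n <;> simp
  · obtain ⟨k, rfl⟩ := Nat.exists_eq_add_of_le h
    refine .inr <| .inr <| .inr <| .inr ⟨h, ?_, by positivity⟩
    simp [pow_add]

namespace Gen

lemma hdeg_cases (g : Gen) : (∃ i, g = h i) ∨ (∃ i, g = c i) ∨ hdeg g = 4 := by
  cases g <;> simp [hdeg]

lemma ideg_ne_two_pow_add_eleven_of_hdeg_eq_four {u : ℕ} {g : Gen} (hg : hdeg g = 4) :
    ideg g ≠ 2 ^ (u + 3) + 11 := by
  have := two_pow_cases_mod_sixteen (u + 3)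
  cases g with
  | h i | c i => simp [hdeg] at hg
  | d i | e i | f i | g i | p i | D3 i | p' i =>
    have := two_pow_cases_mod_sixteen i
    simp only [ideg, pow_add]
    omega

end Gen

lemma weight_single_one_add {ι : Type*} (w : ι → ℕ) (g : ι) (τ : ι →₀ ℕ) :
    weight w (single g 1 + τ) = w g + weight w τ := by
  simp [Finsupp.weight_single]

lemma eq_zero_of_weight_hdeg_eq_zero {σ : Gen →₀ ℕ} (h : weight hdeg σ = 0) : σ = 0 := by
  ext g
  have := Finsupp.le_weight hdeg (s := g) (by cases g <;> simp [hdeg]) σ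
  simp only [Finsupp.coe_zero, Pi.zero_apply]
  omega

lemma exists_eq_single_add_of_weight_hdeg_eq_succ {σ : Gen →₀ ℕ} {n : ℕ}
    (h : weight hdeg σ = n + 1) :
    ∃ g τ, σ = single g 1 + τ ∧ hdeg g + weight hdeg τ = n + 1 := by
  obtain ⟨g, hg⟩ : ∃ g, σ g ≠ 0 := by
    by_contra! hσ
    simp [show σ = 0 from Finsupp.ext hσ] at h
  have hle : single g 1 ≤ σ := Finsupp.single_le_iff.2 (Nat.one_le_iff_ne_zero.2 hg)
  refine ⟨g, σ - single g 1, (add_tsub_cancel_of_le hle).symm, ?_⟩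
  rw [← weight_single_one_add, add_tsub_cancel_of_le hle, h]

lemma exists_eq_single_of_weight_hdeg_eq_one {σ : Gen →₀ ℕ} (h : weight hdeg σ = 1) :
    ∃ a, σ = single (.h a) 1 := by
  obtain ⟨g, τ, rfl, hw⟩ := exists_eq_single_add_of_weight_hdeg_eq_succ h
  rcases g.hdeg_cases with ⟨a, rfl⟩ | ⟨i, rfl⟩ | hg
  · have hτ : weight hdeg τ = 0 := by simp only [hdeg] at hw; omega
    exact ⟨a, by rw [eq_zero_of_weight_hdeg_eq_zero hτ, add_zero]⟩
  · simp only [hdeg] at hw; omega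
  · omega

lemma exists_eq_of_weight_hdeg_eq_two {σ : Gen →₀ ℕ} (h : weight hdeg σ = 2) :
    ∃ a b, σ = single (.h a) 1 + single (.h b) 1 := by
  obtain ⟨g, τ, rfl, hw⟩ := exists_eq_single_add_of_weight_hdeg_eq_succ h
  rcases g.hdeg_cases with ⟨a, rfl⟩ | ⟨i, rfl⟩ | hg
  · have hτ : weight hdeg τ = 1 := by simp only [hdeg] at hw; omega
    obtain ⟨b, rfl⟩ := exists_eq_single_of_weight_hdeg_eq_one hτ
    exact ⟨a, b, rfl⟩
  · simp only [hdeg] at hw; omega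
  · omega

lemma exists_eq_of_weight_hdeg_eq_three {σ : Gen →₀ ℕ} (h : weight hdeg σ = 3) :
    (∃ a b c, σ = single (.h a) 1 + single (.h b) 1 + single (.h c) 1) ∨
      ∃ i, σ = single (.c i) 1 := by
  obtain ⟨g, τ, rfl, hw⟩ := exists_eq_single_add_of_weight_hdeg_eq_succ h
  rcases g.hdeg_cases with ⟨a, rfl⟩ | ⟨i, rfl⟩ | hg
  · have hτ : weight hdeg τ = 2 := by simp only [hdeg] at hw; omega
    obtain ⟨b, c, rfl⟩ := exists_eq_of_weight_hdeg_eq_two hτ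
    exact .inl ⟨a, b, c, by rw [add_assoc]⟩
  · have hτ : weight hdeg τ = 0 := by simp only [hdeg] at hw; omega
    exact .inr ⟨i, by rw [eq_zero_of_weight_hdeg_eq_zero hτ, add_zero]⟩
  · omega

lemma exists_eq_of_weight_hdeg_eq_four {σ : Gen →₀ ℕ} (h : weight hdeg σ = 4) :
    (∃ g, hdeg g = 4 ∧ σ = single g 1) ∨
      (∃ i j, σ = single (.c i) 1 + single (.h j) 1) ∨
      ∃ a b c d, σ = single (.h a) 1 + single (.h b) 1 + single (.h c) 1 + single (.h d) 1 := by
  obtain ⟨g, τ, rfl, hw⟩ := exists_eq_single_add_of_weight_hdeg_eq_succ h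
  rcases g.hdeg_cases with ⟨a, rfl⟩ | ⟨i, rfl⟩ | hg
  · have hτ : weight hdeg τ = 3 := by simp only [hdeg] at hw; omega
    rcases exists_eq_of_weight_hdeg_eq_three hτ with ⟨b, c, d, rfl⟩ | ⟨i, rfl⟩
    · exact .inr <| .inr ⟨a, b, c, d, by simp only [add_assoc]⟩
    · exact .inr <| .inl ⟨i, a, add_comm _ _⟩
  · have hτ : weight hdeg τ = 1 := by simp only [hdeg] at hw; omega
    obtain ⟨j, rfl⟩ := exists_eq_single_of_weight_hdeg_eq_one hτ
    exact .inr <| .inl ⟨i, j, rfl⟩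
  · have hτ : weight hdeg τ = 0 := by omega
    exact .inl ⟨g, hg, by rw [eq_zero_of_weight_hdeg_eq_zero hτ, add_zero]⟩

lemma zero_and_one_mem_of_two_pow_add_eq {u a b c d : ℕ} (hu : 1 ≤ u)
    (h : 2 ^ a + 2 ^ b + 2 ^ c + 2 ^ d = 2 ^ (u + 3) + 11) :
    (a = 0 ∨ b = 0 ∨ c = 0 ∨ d = 0) ∧ (a = 1 ∨ b = 1 ∨ c = 1 ∨ d = 1) := by
  have := two_pow_cases_mod_sixteen a
  have := two_pow_cases_mod_sixteen b
  have := two_pow_cases_mod_sixteen c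
  have := two_pow_cases_mod_sixteen d
  have := two_pow_cases_mod_sixteen (u + 3)
  omega

lemma eq_of_ideg_c_add_ideg_h {u i j : ℕ} (h : ideg (.c i) + ideg (.h j) = 2 ^ (u + 3) + 11) :
    i = 0 ∧ j = u + 3 := by
  simp only [ideg, pow_add] at h
  have := two_pow_cases_mod_sixteen i
  have := two_pow_cases_mod_sixteen j
  have := two_pow_cases_mod_sixteen u
  obtain rfl : i = 0 := by omega
  exact ⟨rfl, Nat.pow_right_injective le_rfl (by simp only [pow_add]; omega)⟩

lemma X_h_zero_mul_X_h_one_mem_relIdeal : X (Gen.h 0) * X (Gen.h 1) ∈ relIdeal :=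
  Ideal.subset_span (Set.mem_iUnion.2 ⟨0, by simp⟩)

lemma X_mul_X_eq_monomial {R σ : Type*} [CommSemiring R] (g g' : σ) :
    (X g * X g' : MvPolynomial σ R) = monomial (single g 1 + single g' 1) 1 := by
  rw [monomial_single_add, pow_one]
  rfl

lemma monomial_mem_relIdeal_of_h_zero_of_h_one {σ : Gen →₀ ℕ} (h0 : σ (.h 0) ≠ 0)
    (h1 : σ (.h 1) ≠ 0) : monomial σ (1 : ZMod 2) ∈ relIdeal := by
  have hle0 : single (Gen.h 0) 1 ≤ σ := Finsupp.single_le_iff.2 (Nat.one_le_iff_ne_zero.2 h0)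
  have hle : single (Gen.h 0) 1 + single (Gen.h 1) 1 ≤ σ := by
    refine (le_tsub_iff_left hle0).1 (Finsupp.single_le_iff.2 ?_)
    simpa [Finsupp.single_apply] using Nat.one_le_iff_ne_zero.2 h1
  rw [← add_tsub_cancel_of_le hle, ← mul_one (1 : ZMod 2), ← monomial_mul,
    ← X_mul_X_eq_monomial]
  exact Ideal.mul_mem_right _ _ X_h_zero_mul_X_h_one_mem_relIdeal

lemma eq_or_monomial_mem_relIdeal {u : ℕ} (hu : 1 ≤ u) {σ : Gen →₀ ℕ}
    (h4 : weight hdeg σ = 4) (hN : weight ideg σ = 2 ^ (u + 3) + 11) :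
    σ = single (.h (u + 3)) 1 + single (.c 0) 1 ∨ monomial σ (1 : ZMod 2) ∈ relIdeal := by
  rcases exists_eq_of_weight_hdeg_eq_four h4 with ⟨g, hg, rfl⟩ | ⟨i, j, rfl⟩ | ⟨a, b, c, d, rfl⟩
  · simp only [Finsupp.weight_single, one_smul] at hN
    exact absurd hN (Gen.ideg_ne_two_pow_add_eleven_of_hdeg_eq_four hg)
  · simp only [map_add, Finsupp.weight_single, one_smul] at hN
    obtain ⟨rfl, rfl⟩ := eq_of_ideg_c_add_ideg_h hN
    exact .inl (add_comm _ _)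
  · simp only [map_add, Finsupp.weight_single, one_smul, ideg] at hN
    obtain ⟨h0, h1⟩ := zero_and_one_mem_of_two_pow_add_eq hu hN
    classical
    right
    apply monomial_mem_relIdeal_of_h_zero_of_h_one <;>
      simp [Finsupp.single_apply] <;> omega

lemma weightedHomogeneousSubmodule_inf_eq_restrictSupport {R σ : Type*} [CommSemiring R]
    (w w' : σ → ℕ) (m m' : ℕ) :
    weightedHomogeneousSubmodule R w m ⊓ weightedHomogeneousSubmodule R w' m' =
      restrictSupport R {d | weight w d = m ∧ weight w' d = m'} := by
  ext p
  simp [mem_restrictSupport_iff, Set.subset_def, IsWeightedHomogeneous, forall_and]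

lemma component_eq_span (k d : ℕ) :
    component k d = Submodule.span (ZMod 2)
      ((fun σ ↦ mkE (monomial σ 1)) '' {σ | weight hdeg σ = k ∧ weight ideg σ = d}) := by
  rw [component, weightedHomogeneousSubmodule_inf_eq_restrictSupport, restrictSupport_eq_span,
    Submodule.map_span, ← Set.image_comp]
  rfl

lemma mkE_eq_zero_iff {p : P} : mkE p = 0 ↔ p ∈ relIdeal :=
  Ideal.Quotient.eq_zero_iff_mem

open DualNumber in
def dualNumberPoint (u : ℕ) : Gen → DualNumber (ZMod 2)
  | .h i => if i = u + 3 then ε else 0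
  | .c i => if i = 0 then 1 else 0
  | _ => 0

open DualNumber in
lemma relIdeal_le_ker_aeval_dualNumberPoint {u : ℕ} (hu : 1 ≤ u) :
    relIdeal ≤ RingHom.ker (aeval (dualNumberPoint u)) := by
  refine Ideal.span_le.2 fun r hr ↦ ?_
  obtain ⟨s, ⟨i, rfl⟩, hi⟩ := hr
  simp only [Set.mem_insert_iff, Set.mem_singleton_iff] at hi
  rcases hi with rfl | rfl | rfl | rfl | rfl | rfl | rfl | rfl <;>
  · simp only [SetLike.mem_coe, RingHom.mem_ker, map_mul, map_pow, map_sub, aeval_X,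
      dualNumberPoint]
    split_ifs <;> first | omega | simp_all [pow_succ, eps_mul_eps]

lemma X_h_mul_X_c_notMem_relIdeal {u : ℕ} (hu : 1 ≤ u) :
    X (Gen.h (u + 3)) * X (Gen.c 0) ∉ relIdeal := fun hmem ↦ by
  have := relIdeal_le_ker_aeval_dualNumberPoint hu hmem
  simpa [dualNumberPoint] using congrArg TrivSqZeroExt.snd this

/-- For every `u ≥ 1`, `E^{4, 4 + n_{1,2,u}} = E^{4, 2^{u+3}+11}` is one-dimensional over `F₂`
with basis the class of `h_{u+3}c₀`; in particular `h_{u+3}c₀ ≠ 0` in `E`. -/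
theorem stmt3 (u : ℕ) (hu : 1 ≤ u) :
    component 4 (2 ^ (u + 3) + 11) =
        Submodule.span (ZMod 2) {mkE (X (Gen.h (u + 3)) * X (Gen.c 0))} ∧
      mkE (X (Gen.h (u + 3)) * X (Gen.c 0)) ≠ 0 := by
  rw [component_eq_span, X_mul_X_eq_monomial]
  refine ⟨le_antisymm ?_ ?_, ?_⟩
  · rw [Submodule.span_le]
    rintro _ ⟨σ, ⟨h4, hN⟩, rfl⟩
    rcases eq_or_monomial_mem_relIdeal hu h4 hN with rfl | hmem
    · exact Submodule.subset_span rfl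
    · simp [mkE_eq_zero_iff.2 hmem]
  · refine Submodule.span_mono (Set.singleton_subset_iff.2 ⟨_, ⟨?_, ?_⟩, rfl⟩) <;>
      simp [Finsupp.weight_single, hdeg, ideg]
  · rw [Ne, mkE_eq_zero_iff, ← X_mul_X_eq_monomial]
    exact X_h_mul_X_c_notMem_relIdeal hu
end
end

section
/- For all natural numbers s ≥ 2 and t ≥ 2, the bidegree (4, 4 + n_{s,t,1}) component E^{4, 2^{s+t+1}+2^{s+t}+2^s+1} of E is the zero vector space. -/
noncomputable section

open MvPolynomial

/-!
The internal degree of each generator `x` is a sum of at most `hdeg x` distinct powers of two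
(`Gen.bits`), with equality only for `hᵢ` and `cᵢ`. So a monomial of homological degree 4 writes
its internal degree as a sum of at most four powers of two. The target
`2^{s+t+1} + 2^{s+t} + 2^s + 2^0` has four binary digits and carrying only loses digits, so these
powers are exactly the four digits, and they come from `h`'s and `c`'s alone. The digits
`i, i+1, i+3` of a `cᵢ` do not fit into `{0, s, s+t, s+t+1}` once `s, t ≥ 2`, hence the monomial
is `h₀ hₛ h_{s+t} h_{s+t+1}`, which vanishes since `h_{s+t} h_{s+t+1} = 0`.
-/

namespace Multiset

theorem eq_val_of_sum_map_two_pow_eq {m : Multiset ℕ} {S : Finset ℕ}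
    (hsum : (m.map (2 ^ ·)).sum = ∑ i ∈ S, 2 ^ i) (hcard : card m ≤ S.card) : m = S.val := by
  induction hn : card m using Nat.strong_induction_on generalizing m with
  | _ n ih =>
    by_cases hm : m.Nodup
    · exact congrArg Finset.val (Finset.equivBitIndices.symm.injective (a₁ := ⟨m, hm⟩) hsum)
    · obtain ⟨a, m', rfl⟩ : ∃ a m', m = a ::ₘ a ::ₘ m' := by
        simpa [nodup_iff_ne_cons_cons] using hm
      -- two copies of `2 ^ a` carry into one copy of `2 ^ (a + 1)`
      have hcarry : (a + 1) ::ₘ m' = S.val := by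
        refine ih (card ((a + 1) ::ₘ m')) (by simp [← hn]) ?_ ?_ rfl
        · rw [← hsum]
          simp only [map_cons, sum_cons, pow_succ]
          ring
        · simp only [card_cons] at hcard ⊢
          omega
      have hcard' := congrArg card hcarry
      simp only [card_cons, Finset.card_val] at hcard' hcard
      omega

end Multiset

theorem Finsupp.weight_eq_sum_map_toMultiset {σ M : Type*} [AddCommMonoid M] (w : σ → M)
    (f : σ →₀ ℕ) : weight w f = (f.toMultiset.map w).sum := by
  classical
  rw [toMultiset_map, sum_toMultiset, sum_mapDomain_index (by simp) (by simp [add_smul]),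
    weight_apply]

namespace Gen

def bits : Gen → Finset ℕ
  | .h i => {i}
  | .c i => {i, i + 1, i + 3}
  | .d i => {i + 1, i + 4}
  | .e i => {i, i + 2, i + 4}
  | .f i => {i + 1, i + 2, i + 4}
  | .g i => {i + 3, i + 4}
  | .p i => {i, i + 2, i + 5}
  | .D3 i => {i, i + 6}
  | .p' i => {i, i + 3, i + 6}

theorem ideg_eq_sum_bits (x : Gen) : ideg x = ∑ i ∈ x.bits, 2 ^ i := by
  cases x <;>
    simp only [ideg, bits, Finset.sum_insert, Finset.sum_singleton, Finset.mem_insert,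
      Finset.mem_singleton, Nat.left_eq_add, Nat.add_left_cancel_iff, Nat.reduceEqDiff,
      OfNat.ofNat_ne_zero, OfNat.one_ne_ofNat, one_ne_zero, or_self, not_false_eq_true] <;>
    ring

theorem card_bits_le_hdeg (x : Gen) : x.bits.card ≤ hdeg x := by
  cases x <;> simp [bits, hdeg, Finset.card_insert_of_notMem]

theorem eq_h_or_eq_c_of_card_bits_eq_hdeg {x : Gen} (hx : x.bits.card = hdeg x) :
    (∃ i, x = h i) ∨ ∃ i, x = c i := by
  cases x <;> simp [bits, hdeg, Finset.card_insert_of_notMem] at hx ⊢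

end Gen

theorem monomial_mem_relIdeal_of_mem_support {σ : Gen →₀ ℕ} {n : ℕ}
    (hn : Gen.h n ∈ σ.support) (hn' : Gen.h (n + 1) ∈ σ.support) (a : ZMod 2) :
    monomial σ a ∈ relIdeal := by
  have hrel : X (Gen.h n) * X (Gen.h (n + 1)) ∈ relIdeal :=
    Ideal.subset_span (Set.mem_iUnion.mpr ⟨n, by simp⟩)
  refine Ideal.mem_of_dvd _ ?_ hrel
  rw [X, X, monomial_mul, monomial_dvd_monomial]
  refine ⟨Or.inr fun x => ?_, one_dvd _⟩
  rw [Finsupp.mem_support_iff] at hn hn'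
  by_cases h1 : x = Gen.h n <;> by_cases h2 : x = Gen.h (n + 1) <;>
    simp_all [Nat.one_le_iff_ne_zero]

theorem Gen.bind_bits_eq_of_sum_map_ideg_eq {M : Multiset Gen} {S : Finset ℕ}
    (hcard : (M.map hdeg).sum ≤ S.card) (hideg : (M.map ideg).sum = ∑ i ∈ S, 2 ^ i) :
    M.bind (fun x => x.bits.val) = S.val ∧ ∀ x ∈ M, x.bits.card = hdeg x := by
  set B := M.bind fun x => x.bits.val
  have hBsum : (B.map (2 ^ ·)).sum = (M.map ideg).sum := by
    rw [Multiset.map_bind, Multiset.sum_bind]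
    exact congrArg Multiset.sum (Multiset.map_congr rfl fun x _ => x.ideg_eq_sum_bits.symm)
  have hBcard : Multiset.card B = (M.map fun x => x.bits.card).sum := Multiset.card_bind _ _
  have hle : (M.map fun x => x.bits.card).sum ≤ (M.map hdeg).sum :=
    Multiset.sum_map_le_sum_map _ _ fun x _ => x.card_bits_le_hdeg
  have hB : B = S.val :=
    Multiset.eq_val_of_sum_map_two_pow_eq (hBsum.trans hideg) (by omega)
  refine ⟨hB, ?_⟩
  by_contra! ⟨x, hx, hne⟩
  have hlt := Multiset.sum_lt_sum (fun x _ => x.card_bits_le_hdeg)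
    ⟨x, hx, lt_of_le_of_ne x.card_bits_le_hdeg hne⟩
  have hBcard' : Multiset.card B = S.card := congrArg Multiset.card hB
  omega

theorem h_mem_of_sum_map_hdeg_eq_four {s t : ℕ} (hs : 2 ≤ s) (ht : 2 ≤ t) {M : Multiset Gen}
    (h4 : (M.map hdeg).sum = 4)
    (hN : (M.map ideg).sum = 2 ^ (s + t + 1) + 2 ^ (s + t) + 2 ^ s + 1) :
    Gen.h (s + t) ∈ M ∧ Gen.h (s + t + 1) ∈ M := by
  set T : Finset ℕ := {0, s, s + t, s + t + 1}
  have h0 : 0 ∉ ({s, s + t, s + t + 1} : Finset ℕ) := by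
    simp only [Finset.mem_insert, Finset.mem_singleton]; omega
  have h1 : s ∉ ({s + t, s + t + 1} : Finset ℕ) := by
    simp only [Finset.mem_insert, Finset.mem_singleton]; omega
  have h2 : s + t ≠ s + t + 1 := by omega
  have hTcard : T.card = 4 := by
    rw [Finset.card_insert_of_notMem h0, Finset.card_insert_of_notMem h1, Finset.card_pair h2]
  have hTsum : 2 ^ (s + t + 1) + 2 ^ (s + t) + 2 ^ s + 1 = ∑ i ∈ T, 2 ^ i := by
    rw [Finset.sum_insert h0, Finset.sum_insert h1, Finset.sum_pair h2]
    ring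
  obtain ⟨hB, hcard⟩ :=
    Gen.bind_bits_eq_of_sum_map_ideg_eq (h4.trans hTcard.symm).le (hN.trans hTsum)
  have hM : ∀ x ∈ M, ∃ j, x = Gen.h j := by
    intro x hx
    rcases x.eq_h_or_eq_c_of_card_bits_eq_hdeg (hcard x hx) with hxh | ⟨i, rfl⟩
    · exact hxh
    · have hsub : (Gen.c i).bits ⊆ T := Finset.val_le_iff.mp (hB ▸ Multiset.le_bind M hx)
      simp only [Gen.bits, T, Finset.insert_subset_iff, Finset.singleton_subset_iff,
        Finset.mem_insert, Finset.mem_singleton] at hsub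
      omega
  have hmem : ∀ k ∈ T, Gen.h k ∈ M := by
    intro k hk
    obtain ⟨x, hx, hkx⟩ := Multiset.mem_bind.mp (hB ▸ hk : k ∈ M.bind fun x => x.bits.val)
    obtain ⟨j, rfl⟩ := hM x hx
    simp only [Gen.bits, Finset.singleton_val, Multiset.mem_singleton] at hkx
    exact hkx ▸ hx
  exact ⟨hmem _ (by simp [T]), hmem _ (by simp [T])⟩

theorem monomial_mem_relIdeal {s t : ℕ} (hs : 2 ≤ s) (ht : 2 ≤ t) {σ : Gen →₀ ℕ}
    (h4 : Finsupp.weight hdeg σ = 4)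
    (hN : Finsupp.weight ideg σ = 2 ^ (s + t + 1) + 2 ^ (s + t) + 2 ^ s + 1) (a : ZMod 2) :
    monomial σ a ∈ relIdeal := by
  rw [Finsupp.weight_eq_sum_map_toMultiset] at h4 hN
  obtain ⟨hst, hst'⟩ := h_mem_of_sum_map_hdeg_eq_four hs ht h4 hN
  exact monomial_mem_relIdeal_of_mem_support ((Finsupp.mem_toMultiset _ _).mp hst)
    ((Finsupp.mem_toMultiset _ _).mp hst') a

/-- For all `s ≥ 2` and `t ≥ 2`, the component
`E^{4, 4 + n_{s,t,1}} = E^{4, 2^{s+t+1}+2^{s+t}+2^s+1}` is zero. -/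
theorem stmt7 (s t : ℕ) (hs : 2 ≤ s) (ht : 2 ≤ t) :
    component 4 (2 ^ (s + t + 1) + 2 ^ (s + t) + 2 ^ s + 1) = ⊥ := by
  rw [component, eq_bot_iff]
  rintro _ ⟨p, ⟨hp4, hpN⟩, rfl⟩
  rw [Submodule.mem_bot, AlgHom.toLinearMap_apply, mkE, Ideal.Quotient.mkₐ_eq_mk,
    Ideal.Quotient.eq_zero_iff_mem, ← p.support_sum_monomial_coeff]
  exact Ideal.sum_mem _ fun σ hσ =>
    monomial_mem_relIdeal hs ht (hp4 (mem_support_iff.mp hσ)) (hpN (mem_support_iff.mp hσ)) _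
end
end
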